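/- Let g ≥ 1 and n ≥ 2, and let 1 ≤ i ≤ j ≤ n−1. Then in the group PG(g,0,n): x_j F_i x_j⁻¹ = F_{j+1}⁻¹ F_i F_{j+1} (the verification of relation (PT2) in the proof of Proposition 3.3). -/

import Mathlib

namespace LabruereParisP

/-- `altWord a b m` is the alternating word `prod(a,b,m) = abab⋯` of length `m`. -/
def altWord {α : Type*} (a b : α) : ℕ → FreeGroup α
  | 0 => 1
  | k + 1 => FreeGroup.of a * altWord b a k

/-- The vertex set of the Coxeter graph `PΓ_{g,0,n}`: `Sum.inl i` is `x_i`
(`0 ≤ i ≤ n`), `Sum.inr (Sum.inl j)` is `y_{j+1}` (`1 ≤ j+1 ≤ 2g-1`), and the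
`Unit` vertex is `z`. -/
abbrev S (g n : ℕ) := Fin (n + 1) ⊕ Fin (2 * g - 1) ⊕ Unit

/-- The Coxeter matrix of `PΓ_{g,0,n}`: `m(x_i,y_1) = 3`, `m(y_j,y_{j+1}) = 3`,
`m(z,y_3) = 3`, and label `2` for every other pair of distinct vertices. -/
def cox (g n : ℕ) : S g n → S g n → ℕ
  | Sum.inl _, Sum.inr (Sum.inl j) => if (j : ℕ) = 0 then 3 else 2
  | Sum.inr (Sum.inl j), Sum.inl _ => if (j : ℕ) = 0 then 3 else 2
  | Sum.inr (Sum.inl j), Sum.inr (Sum.inl k) =>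
      if j = k then 1 else if (j : ℕ) + 1 = (k : ℕ) ∨ (k : ℕ) + 1 = (j : ℕ) then 3 else 2
  | Sum.inr (Sum.inr ()), Sum.inr (Sum.inl j) => if (j : ℕ) = 2 then 3 else 2
  | Sum.inr (Sum.inl j), Sum.inr (Sum.inr ()) => if (j : ℕ) = 2 then 3 else 2
  | a, b => if a = b then 1 else 2

/-- The generator `x_i` of the free group (`0 ≤ i ≤ n`; junk value `1` out of range). -/
def fx (g n i : ℕ) : FreeGroup (S g n) :=
  if h : i < n + 1 then FreeGroup.of (Sum.inl ⟨i, h⟩) else 1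

/-- The generator `y_j` (`1 ≤ j ≤ 2g-1`; junk value `1` out of range). -/
def fy (g n j : ℕ) : FreeGroup (S g n) :=
  if h : 1 ≤ j ∧ j ≤ 2 * g - 1 then FreeGroup.of (Sum.inr (Sum.inl ⟨j - 1, by omega⟩)) else 1

/-- The generator `z`. -/
def fz (g n : ℕ) : FreeGroup (S g n) := FreeGroup.of (Sum.inr (Sum.inr ()))

/-- The Artin relators of `PΓ_{g,0,n}`. -/
def artinRels (g n : ℕ) : Set (FreeGroup (S g n)) :=
  {w | ∃ a b : S g n, a ≠ b ∧
      w = altWord a b (cox g n a b) * (altWord b a (cox g n a b))⁻¹}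

/-- `W(i,j) = (x_jy_1x_{i+1}x_jy_1x_j)⁻¹ · x_i · (x_jy_1x_{i+1}x_jy_1x_j)`. -/
def Wrel (g n i j : ℕ) : FreeGroup (S g n) :=
  (fx g n j * fy g n 1 * fx g n (i + 1) * fx g n j * fy g n 1 * fx g n j)⁻¹ *
    fx g n i *
    (fx g n j * fy g n 1 * fx g n (i + 1) * fx g n j * fy g n 1 * fx g n j)

/-- The relators (PR1)–(PR6) of Proposition 3.3 of Labruère–Paris. -/
def prRels (g n : ℕ) : Set (FreeGroup (S g n)) :=
  {w |
    -- (PR1)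
    (2 ≤ g ∧ w = (fy g n 1 * fy g n 2 * fy g n 3 * fz g n) ^ 10 *
        ((fx g n 0 * fy g n 1 * fy g n 2 * fy g n 3 * fz g n) ^ 6)⁻¹) ∨
    -- (PR2)
    (3 ≤ g ∧ w = (fy g n 1 * fy g n 2 * fy g n 3 * fz g n * fy g n 4 * fy g n 5) ^ 12 *
        ((fx g n 0 * fy g n 1 * fy g n 2 * fy g n 3 * fz g n *
          fy g n 4 * fy g n 5) ^ 9)⁻¹) ∨
    -- (PR3)
    (∃ i j k : ℕ, k < j ∧ j < i ∧ i ≤ n - 1 ∧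
        w = fx g n k * Wrel g n i j * (Wrel g n i j * fx g n k)⁻¹) ∨
    -- (PR4)
    (2 ≤ g ∧ ∃ i j : ℕ, j < i ∧ i ≤ n - 1 ∧
        w = fy g n 2 * Wrel g n i j * (Wrel g n i j * fy g n 2)⁻¹) ∨
    -- (PR5)
    (2 ≤ g ∧ w = (fx g n 0 * fx g n 1 * fy g n 1 * fy g n 2 * fy g n 3 * fz g n) ^ 5 *
        ((fx g n 1 * fy g n 1 * fy g n 2 * fy g n 3 * fz g n) ^ 6)⁻¹) ∨
    -- (PR6)
    (2 ≤ g ∧ ∃ i : ℕ, 1 ≤ i ∧ i ≤ n - 1 ∧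
        w = (fx g n i * fx g n (i + 1) * fy g n 1 * fy g n 2 * fy g n 3 * fz g n) ^ 5 *
          ((fx g n (i + 1) * fy g n 1 * fy g n 2 * fy g n 3 * fz g n) ^ 6)⁻¹ *
          ((fx g n 0 * fx g n i * fy g n 1 * fx g n (i + 1)) ^ 3 *
            ((fx g n 0 * fy g n 1 * fx g n (i + 1)) ^ 4)⁻¹)⁻¹)}

/-- The group `PG(g,0,n)` of Proposition 3.3: the quotient of `A(PΓ_{g,0,n})`
by the relations (PR1)–(PR6). -/
abbrev PG (g n : ℕ) := PresentedGroup (artinRels g n ∪ prRels g n)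

/-- The image of `x_i` in `PG(g,0,n)`. -/
def X (g n i : ℕ) : PG g n := PresentedGroup.mk _ (fx g n i)

/-- The image of `y_j` in `PG(g,0,n)`. -/
def Y (g n j : ℕ) : PG g n := PresentedGroup.mk _ (fy g n j)

/-- The image of `z` in `PG(g,0,n)`. -/
def Z (g n : ℕ) : PG g n := PresentedGroup.mk _ (fz g n)

/-- `Δ(z_1,…,z_m) = (z_1⋯z_m)(z_1⋯z_{m-1})⋯(z_1z_2)z_1`. -/
def deltaList {G : Type*} [Group G] (zs : List G) : G :=
  (((List.range zs.length).reverse).map fun k => (zs.take (k + 1)).prod).prod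

/-- `F_i = f(α_i)` (`1 ≤ i ≤ n`): for `i = n`, `F_n = x_{n-1}⁻¹x_n`; for
`1 ≤ i ≤ n-1`,
`F_i = x_{n-1}⁻¹·(x_{i-1}y_1x_nx_{i-1}y_1x_{i-1})⁻¹·x_n⁻¹x_{n-1}·(x_{i-1}y_1x_nx_{i-1}y_1x_{i-1})·x_{n-1}`. -/
def F (g n i : ℕ) : PG g n :=
  if i = n then (X g n (n - 1))⁻¹ * X g n n
  else
    (X g n (n - 1))⁻¹ *
      (X g n (i - 1) * Y g n 1 * X g n n * X g n (i - 1) * Y g n 1 * X g n (i - 1))⁻¹ *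
      (X g n n)⁻¹ * X g n (n - 1) *
      (X g n (i - 1) * Y g n 1 * X g n n * X g n (i - 1) * Y g n 1 * X g n (i - 1)) *
      X g n (n - 1)

/-- `B_i = f(β_i) = Δ(x_{n-1},y_1,…,y_i)⁻¹ · x_{n-1}⁻¹x_n · Δ(x_{n-1},y_1,…,y_i)`
(`1 ≤ i ≤ 2g-1`). -/
def B (g n i : ℕ) : PG g n :=
  (deltaList (X g n (n - 1) :: (List.range i).map fun k => Y g n (k + 1)))⁻¹ *
    (X g n (n - 1))⁻¹ * X g n n *
    deltaList (X g n (n - 1) :: (List.range i).map fun k => Y g n (k + 1))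

end LabruereParisP

/-!
Write `p = x_{i-1}`, `q = x_j`, `t = x_n`, `M = x_{n-1}`, `y = y_1` and `Δ_u = Δ(u, y, t)`.
The `x`'s commute pairwise and braid with `y`, so `Δ_u` is the Garside element of a braid group
on `u, y, t`, and conjugation by it exchanges `u` and `t`. Relation (PT2) says that
`F_{j+1} x_j` commutes with `F_i`, and both are conjugates by `M` of words in `Δ_p`, `Δ_q`.
For `j = n - 1` this comes down to `p` commuting with `t⁻¹ M`. For `j < n - 1`, relation (PR3)
lets `p` commute with `Δ_q⁻¹ M Δ_q`, and the identity `Δ_q Δ_p⁻¹ = t D t⁻¹` with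
`D = y q p⁻¹ y⁻¹` reduces the rest to `D M D⁻¹` commuting with `M`, which is a conjugate of
`p` commuting with `q`.
-/

namespace LabruereParisP

section Braid

variable {G : Type*} [Group G]

def delta3 (a b c : G) : G := a * b * c * a * b * a

theorem semiconjBy_mul_of_braid {a b : G} (h : a * b * a = b * a * b) :
    SemiconjBy (a * b) a b := by
  rw [SemiconjBy, h, mul_assoc]

theorem mul_mul_inv_eq_of_braid {a b : G} (h : a * b * a = b * a * b) :
    a * b * a⁻¹ = b⁻¹ * a * b := by
  calc a * b * a⁻¹ = b⁻¹ * (b * a * b) * a⁻¹ := by group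
    _ = b⁻¹ * a * b := by rw [← h]; group

theorem commute_inv_conj_iff {a b : G} (c : G) :
    Commute (c⁻¹ * a * c) (c⁻¹ * b * c) ↔ Commute a b := by
  simpa using Commute.conj_iff (a := a) (b := b) c⁻¹

theorem inv_conj_mul_eq_inv_conj {a c q : G} (h : Commute c q) :
    c⁻¹ * a * c * q = c⁻¹ * (a * q) * c := by
  rw [mul_assoc _ c, h.eq]; group

theorem conj_eq_inv_conj_iff_commute {a b x : G} :
    a * x * a⁻¹ = b⁻¹ * x * b ↔ Commute (b * a) x := by
  rw [commute_iff_eq, ← mul_left_cancel_iff (a := b), ← mul_right_cancel_iff (a := a)]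
  simp only [mul_assoc, mul_inv_cancel_left, inv_mul_cancel, mul_one]

variable {p q t y M : G}

theorem delta3_eq (hpt : Commute p t) (hp : p * y * p = y * p * y) :
    delta3 p y t = y * p * y * t * y * p := by
  calc delta3 p y t = p * y * (t * p) * y * p := by simp only [delta3, mul_assoc]
    _ = p * y * p * t * y * p := by rw [← hpt.eq]; simp only [mul_assoc]
    _ = y * p * y * t * y * p := by rw [hp]

theorem semiconjBy_delta3_left (hpt : Commute p t) (hp : p * y * p = y * p * y)
    (ht : t * y * t = y * t * y) : SemiconjBy (delta3 p y t) p t := by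
  have e : delta3 p y t = p * (y * t) * (p * y) * p := by simp only [delta3, mul_assoc]
  rw [e]
  exact ((SemiconjBy.mul_left hpt (semiconjBy_mul_of_braid ht.symm)).mul_left
    (semiconjBy_mul_of_braid hp)).mul_left (Commute.refl p)

theorem semiconjBy_delta3_right (hpt : Commute p t) (hp : p * y * p = y * p * y)
    (ht : t * y * t = y * t * y) : SemiconjBy (delta3 p y t) t p := by
  have e : delta3 p y t = p * (y * p) * (t * y) * p := by
    rw [delta3_eq hpt hp, ← hp]; simp only [mul_assoc]
  rw [e]
  exact ((SemiconjBy.mul_left (Commute.refl p) (semiconjBy_mul_of_braid hp.symm)).mul_left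
    (semiconjBy_mul_of_braid ht)).mul_left hpt

theorem commute_conj_delta3_inv_mul (hpt : Commute p t) (hpM : Commute p M)
    (hp : p * y * p = y * p * y) (ht : t * y * t = y * t * y) :
    Commute t ((delta3 p y t)⁻¹ * t⁻¹ * M * delta3 p y t) := by
  set A := delta3 p y t
  have hAt : A * t * A⁻¹ = p := by
    rw [(semiconjBy_delta3_right hpt hp ht).eq, mul_inv_cancel_right]
  rw [← Commute.conj_iff A, hAt,
    show A * (A⁻¹ * t⁻¹ * M * A) * A⁻¹ = t⁻¹ * M by group]
  exact hpt.inv_right.mul_right hpM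

theorem delta3_mul_inv_delta3 (hpt : Commute p t) (hqt : Commute q t)
    (hp : p * y * p = y * p * y) (hq : q * y * q = y * q * y) (ht : t * y * t = y * t * y) :
    delta3 q y t * (delta3 p y t)⁻¹ = t * (y * q * p⁻¹ * y⁻¹) * t⁻¹ := by
  have hA : delta3 p y t * p = t * delta3 p y t := (semiconjBy_delta3_left hpt hp ht).eq
  have hB : delta3 q y t * q = t * delta3 q y t := (semiconjBy_delta3_left hqt hq ht).eq
  have hDA : y * q * p⁻¹ * y⁻¹ * delta3 p y t = delta3 q y t * q⁻¹ * p := by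
    rw [delta3_eq hpt hp, delta3_eq hqt hq]; group
  generalize delta3 p y t = A at *
  generalize delta3 q y t = B at *
  rw [mul_inv_eq_iff_eq_mul]
  calc B = t * B * q⁻¹ := by rw [← hB, mul_inv_cancel_right]
    _ = t * (y * q * p⁻¹ * y⁻¹ * A) * p⁻¹ := by rw [hDA]; group
    _ = t * (y * q * p⁻¹ * y⁻¹) * t⁻¹ * (t * A) * p⁻¹ := by group
    _ = t * (y * q * p⁻¹ * y⁻¹) * t⁻¹ * A := by rw [← hA]; group

theorem commute_conj_of_braid (hpq : Commute p q) (hpM : Commute p M) (hqM : Commute q M)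
    (hp : p * y * p = y * p * y) (hq : q * y * q = y * q * y) (hM : M * y * M = y * M * y) :
    Commute ((y * q * p⁻¹ * y⁻¹) * M * (y * q * p⁻¹ * y⁻¹)⁻¹) M := by
  have hcq : y * M * (q * y) * q * (y * M * (q * y))⁻¹ = M := by
    rw [((semiconjBy_mul_of_braid hM.symm).mul_left (semiconjBy_mul_of_braid hq)).eq,
      mul_inv_cancel_right]
  have hMqp : Commute M (q * p⁻¹) := hqM.symm.mul_right hpM.symm.inv_right
  have hcp : y * M * (q * y) * p * (y * M * (q * y))⁻¹ =
      (y * q * p⁻¹ * y⁻¹) * M * (y * q * p⁻¹ * y⁻¹)⁻¹ := by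
    calc y * M * (q * y) * p * (y * M * (q * y))⁻¹
        = y * M * q * (y * p * y⁻¹) * q⁻¹ * M⁻¹ * y⁻¹ := by group
      _ = y * (M * (q * p⁻¹)) * y * ((q * p⁻¹)⁻¹ * M⁻¹) * y⁻¹ := by
        rw [mul_mul_inv_eq_of_braid hp.symm]; group
      _ = y * q * p⁻¹ * (M * y * M⁻¹) * p * q⁻¹ * y⁻¹ := by
        rw [hMqp.eq, ← hMqp.inv_inv.eq]; group
      _ = (y * q * p⁻¹ * y⁻¹) * M * (y * q * p⁻¹ * y⁻¹)⁻¹ := by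
        rw [mul_mul_inv_eq_of_braid hM]; group
  have h := hpq.conj (y * M * (q * y))
  rwa [hcp, hcq] at h

theorem commute_conj_delta3 (hpq : Commute p q) (hpt : Commute p t) (hpM : Commute p M)
    (hqt : Commute q t) (hqM : Commute q M) (htM : Commute t M)
    (hp : p * y * p = y * p * y) (hq : q * y * q = y * q * y) (ht : t * y * t = y * t * y)
    (hM : M * y * M = y * M * y) :
    Commute ((delta3 p y t)⁻¹ * M * delta3 p y t) ((delta3 q y t)⁻¹ * M * delta3 q y t) := by
  have hBA := delta3_mul_inv_delta3 hpt hqt hp hq ht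
  have hDM := commute_conj_of_braid hpq hpM hqM hp hq hM
  have htMt : t⁻¹ * M * t = M := by rw [mul_assoc, ← htM.eq, inv_mul_cancel_left]
  generalize y * q * p⁻¹ * y⁻¹ = D at *
  generalize delta3 q y t = B at *
  rw [show delta3 p y t = (t * D * t⁻¹)⁻¹ * B by rw [← hBA]; group]
  convert hDM.conj (B⁻¹ * t) using 1
  · calc ((t * D * t⁻¹)⁻¹ * B)⁻¹ * M * ((t * D * t⁻¹)⁻¹ * B)
        = B⁻¹ * t * D * (t⁻¹ * M * t) * D⁻¹ * t⁻¹ * B := by group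
      _ = B⁻¹ * t * (D * M * D⁻¹) * (B⁻¹ * t)⁻¹ := by rw [htMt]; group
  · calc B⁻¹ * M * B = B⁻¹ * t * (t⁻¹ * M * t) * (B⁻¹ * t)⁻¹ := by group
      _ = B⁻¹ * t * M * (B⁻¹ * t)⁻¹ := by rw [htMt]

theorem commute_conj_delta3_inv_mul_mul (hpq : Commute p q) (hpt : Commute p t) (hpM : Commute p M)
    (hqt : Commute q t) (hqM : Commute q M) (htM : Commute t M)
    (hp : p * y * p = y * p * y) (hq : q * y * q = y * q * y) (ht : t * y * t = y * t * y)
    (hM : M * y * M = y * M * y) (hw : Commute p ((delta3 q y t)⁻¹ * M * delta3 q y t)) :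
    Commute ((delta3 q y t)⁻¹ * t⁻¹ * M * delta3 q y t * q)
      ((delta3 p y t)⁻¹ * t⁻¹ * M * delta3 p y t) := by
  have hAB := commute_conj_delta3 hpq hpt hpM hqt hqM htM hp hq ht hM
  have hA : delta3 p y t * p = t * delta3 p y t := (semiconjBy_delta3_left hpt hp ht).eq
  have hB : delta3 q y t * q = t * delta3 q y t := (semiconjBy_delta3_left hqt hq ht).eq
  have htMt : t⁻¹ * M * t = M := by rw [mul_assoc, ← htM.eq, inv_mul_cancel_left]
  generalize delta3 p y t = A at *
  generalize delta3 q y t = B at *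
  have hQ : B⁻¹ * t⁻¹ * M * B * q = B⁻¹ * M * B := by
    calc B⁻¹ * t⁻¹ * M * B * q = B⁻¹ * t⁻¹ * M * (t * B) := by rw [mul_assoc _ B, hB]
      _ = B⁻¹ * (t⁻¹ * M * t) * B := by group
      _ = B⁻¹ * M * B := by rw [htMt]
  have hP : A⁻¹ * t⁻¹ * M * A = p⁻¹ * (A⁻¹ * M * A) := by
    rw [← mul_inv_rev, ← hA]; group
  rw [hQ, hP]
  exact (hw.inv_left.mul_left hAB).symm

end Braid

section Presentation

variable {g n : ℕ}

theorem X_eq_of {i : ℕ} (hi : i < n + 1) : X g n i = PresentedGroup.of (Sum.inl ⟨i, hi⟩) := by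
  rw [X, fx, dif_pos hi]; rfl

theorem Y_one_eq_of (hg : 1 ≤ g) :
    Y g n 1 = PresentedGroup.of (Sum.inr (Sum.inl ⟨0, by omega⟩)) := by
  rw [Y, fy, dif_pos ⟨le_rfl, by omega⟩]; rfl

theorem mk_altWord_cox {a b : S g n} (hab : a ≠ b) :
    PresentedGroup.mk (artinRels g n ∪ prRels g n) (altWord a b (cox g n a b)) =
      PresentedGroup.mk _ (altWord b a (cox g n a b)) :=
  PresentedGroup.mk_eq_mk_of_mul_inv_mem (Or.inl ⟨a, b, hab, rfl⟩)

theorem commute_X {a b : ℕ} (ha : a ≤ n) (hb : b ≤ n) (hab : a ≠ b) :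
    Commute (X g n a) (X g n b) := by
  have h := mk_altWord_cox (g := g) (n := n) (a := Sum.inl ⟨a, by omega⟩)
    (b := Sum.inl ⟨b, by omega⟩) (by simpa using hab)
  simp only [cox, Sum.inl.injEq, Fin.mk.injEq, hab, ↓reduceIte, altWord, mul_one, map_mul] at h
  rw [X_eq_of, X_eq_of]; exact h

theorem X_braid_Y (hg : 1 ≤ g) {a : ℕ} (ha : a ≤ n) :
    X g n a * Y g n 1 * X g n a = Y g n 1 * X g n a * Y g n 1 := by
  have h := mk_altWord_cox (g := g) (n := n) (a := Sum.inl ⟨a, by omega⟩)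
    (b := Sum.inr (Sum.inl ⟨0, by omega⟩)) (by simp)
  simp only [cox, ↓reduceIte, altWord, mul_one, map_mul] at h
  rw [X_eq_of (by omega), Y_one_eq_of hg]
  exact h

theorem commute_X_conj_delta3 {k j : ℕ} (hkj : k < j) (hj : j < n - 1) :
    Commute (X g n k) ((delta3 (X g n j) (Y g n 1) (X g n n))⁻¹ * X g n (n - 1) *
      delta3 (X g n j) (Y g n 1) (X g n n)) := by
  have h := PresentedGroup.mk_eq_mk_of_mul_inv_mem (rels := artinRels g n ∪ prRels g n)
    (Or.inr (Or.inr (Or.inr (Or.inl ⟨n - 1, j, k, hkj, hj, le_rfl, rfl⟩))))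
  rw [Wrel, Nat.sub_add_cancel (by omega : 1 ≤ n)] at h
  simp only [map_mul, map_inv] at h
  exact h

theorem F_eq_conj {i : ℕ} (hi : i ≠ n) :
    F g n i = (X g n (n - 1))⁻¹ * ((delta3 (X g n (i - 1)) (Y g n 1) (X g n n))⁻¹ *
      (X g n n)⁻¹ * X g n (n - 1) * delta3 (X g n (i - 1)) (Y g n 1) (X g n n)) *
      X g n (n - 1) := by
  rw [F, if_neg hi, delta3]
  group

end Presentation

end LabruereParisP

open LabruereParisP in
theorem relation_PT2_general (g n : ℕ) (hg : 1 ≤ g)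
    (i j : ℕ) (hi : 1 ≤ i) (hij : i ≤ j) (hj : j ≤ n - 1) :
    X g n j * F g n i * (X g n j)⁻¹ = (F g n (j + 1))⁻¹ * F g n i * F g n (j + 1) := by
  rw [conj_eq_inv_conj_iff_commute, F_eq_conj (by omega : i ≠ n)]
  obtain rfl | hjn := hj.eq_or_lt
  · rw [Nat.sub_add_cancel (by omega), F, if_pos rfl, commute_inv_conj_iff]
    refine commute_conj_delta3_inv_mul (commute_X ?_ ?_ ?_) (commute_X ?_ ?_ ?_)
      (X_braid_Y hg ?_) (X_braid_Y hg ?_) <;> omega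
  · rw [F_eq_conj (by omega : j + 1 ≠ n), Nat.add_sub_cancel,
      inv_conj_mul_eq_inv_conj (commute_X (by omega) (by omega) (by omega)), commute_inv_conj_iff]
    refine commute_conj_delta3_inv_mul_mul (commute_X ?_ ?_ ?_) (commute_X ?_ ?_ ?_)
      (commute_X ?_ ?_ ?_) (commute_X ?_ ?_ ?_) (commute_X ?_ ?_ ?_) (commute_X ?_ ?_ ?_)
      (X_braid_Y hg ?_) (X_braid_Y hg ?_) (X_braid_Y hg ?_) (X_braid_Y hg ?_)
      (commute_X_conj_delta3 ?_ hjn) <;> omega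

open LabruereParisP in
/-- The verification of relation (PT2) in the proof of Proposition 3.3 of
Labruère–Paris: in `PG(g,0,n)`, `x_jF_ix_j⁻¹ = F_{j+1}⁻¹F_iF_{j+1}` for
`1 ≤ i ≤ j ≤ n-1`. -/
theorem relation_PT2 (g n : ℕ) (hg : 1 ≤ g) (hn : 2 ≤ n)
    (i j : ℕ) (hi : 1 ≤ i) (hij : i ≤ j) (hj : j ≤ n - 1) :
    X g n j * F g n i * (X g n j)⁻¹ = (F g n (j + 1))⁻¹ * F g n i * F g n (j + 1) :=
  relation_PT2_general g n hg i j hi hij hj
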